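/- arXiv:1502.05677 — 5 statements merged into one kernel-verified Lean document; each statement's English description precedes it below -/
import Mathlib

section
/- The two-component operator P with entries P^{11} = d_x + u^2 d_y + (1/2) u^2_y, P^{12} = −(u^2_x + u^2 u^2_y)/u^1, P^{21} = (u^2_x + u^2 u^2_y)/u^1, P^{22} = 0 (defined on the domain u^1 ≠ 0) satisfies all of Mokhov's conditions for a two-dimensional Hamiltonian operator of hydrodynamic type: g^{ijα} = g^{jiα}, ∂g^{ijα}/∂u^k = b^{ijα}_k + b^{jiα}_k, and the remaining Jacobi-identity relations. -/
open scoped BigOperators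

/-- Partial derivative of `f` with respect to the `k`-th coordinate. -/
noncomputable def pd {n : ℕ} (k : Fin n) (f : (Fin n → ℝ) → ℝ) (x : Fin n → ℝ) : ℝ :=
  fderiv ℝ f x (Pi.single k 1)

/-- The bracketed expression appearing in Mokhov's conditions (a5) and (a7). -/
noncomputable def mokA5 {d n : ℕ}
    (g : Fin d → Fin n → Fin n → (Fin n → ℝ) → ℝ)
    (b : Fin d → Fin n → Fin n → Fin n → (Fin n → ℝ) → ℝ)
    (α β : Fin d) (i j r q : Fin n) (x : Fin n → ℝ) : ℝ :=
  ∑ s, (g α s i x * (pd q (b β j r s) x - pd s (b β j r q) x)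
        + b α i j s x * b β s r q x - b α i r s x * b β s j q x)

/-- Mokhov's conditions (a1)–(a7) for a `d`-dimensional first-order Hamiltonian
operator of Dubrovin–Novikov type with metrics `g` and coefficients `b`, on a domain `U`. -/
def Mokhov (d n : ℕ) (U : Set (Fin n → ℝ))
    (g : Fin d → Fin n → Fin n → (Fin n → ℝ) → ℝ)
    (b : Fin d → Fin n → Fin n → Fin n → (Fin n → ℝ) → ℝ) : Prop :=
  -- (a1)
  (∀ x ∈ U, ∀ α i j, g α i j x = g α j i x) ∧
  -- (a2)
  (∀ x ∈ U, ∀ α i j k, pd k (g α i j) x = b α i j k x + b α j i k x) ∧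
  -- (a3)
  (∀ x ∈ U, ∀ α β i j r,
    (∑ s, (g α s i x * b β j r s x - g β s j x * b α i r s x))
      + (∑ s, (g β s i x * b α j r s x - g α s j x * b β i r s x)) = 0) ∧
  -- (a4)
  (∀ x ∈ U, ∀ α β i j r,
    (∑ s, (g α s i x * b β j r s x - g β s j x * b α i r s x))
      + (∑ s, (g α s j x * b β r i s x - g β s r x * b α j i s x))
      + (∑ s, (g α s r x * b β i j s x - g β s i x * b α r j s x)) = 0) ∧
  -- (a5)
  (∀ x ∈ U, ∀ α β i j r q,
    mokA5 g b α β i j r q x + mokA5 g b β α i j r q x = 0) ∧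
  -- (a6)
  (∀ x ∈ U, ∀ α β i j r q,
    ∑ s, (g β s i x * pd s (b α j r q) x
          - b β i j s x * b α s r q x - b β i r s x * b α j s q x)
    = ∑ s, (g α s j x * pd s (b β i r q) x
          - b α j i s x * b β s r q x - b β i s q x * b α j r s x)) ∧
  -- (a7)
  (∀ x ∈ U, ∀ α β i j r q k,
    pd k (mokA5 g b α β i j r q) x
    + ((∑ s, b β s i q x * (pd s (b α j r k) x - pd k (b α j r s) x))
       + (∑ s, b β s j q x * (pd s (b α r i k) x - pd k (b α r i s) x))
       + (∑ s, b β s r q x * (pd s (b α i j k) x - pd k (b α i j s) x)))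
    + pd q (mokA5 g b β α i j r k) x
    + ((∑ s, b α s i k x * (pd s (b β j r q) x - pd q (b β j r s) x))
       + (∑ s, b α s j k x * (pd s (b β r i q) x - pd q (b β r i s) x))
       + (∑ s, b α s r k x * (pd s (b β i j q) x - pd q (b β i j s) x))) = 0)

/-!
All coefficients are rational functions of `u¹, u²`, so each of Mokhov's relations is a finite
family of identities between explicit rational functions on `u¹ ≠ 0`. Only (a7) involves more than
pointwise values: the bracket of (a5) vanishes identically on the open set `u¹ ≠ 0`, hence so do its
derivatives, and what remains of (a7) is the sum of two cyclic sums, exchanged by `α ↔ β, q ↔ k`,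
each of which vanishes on its own.
-/

section PartialDerivative

variable {n : ℕ}

@[simp]
lemma pd_const (k : Fin n) (c : ℝ) (x : Fin n → ℝ) : pd k (fun _ => c) x = 0 := by
  simp [pd]

@[simp]
lemma pd_neg (k : Fin n) (f : (Fin n → ℝ) → ℝ) (x : Fin n → ℝ) :
    pd k (fun y => -f y) x = -pd k f x := by
  simp [pd]

lemma pd_apply (k j : Fin n) (x : Fin n → ℝ) :
    pd k (fun y => y j) x = if j = k then 1 else 0 := by
  rw [pd, (hasFDerivAt_apply j x).fderiv]
  simp [Pi.single_apply]

lemma hasFDerivAt_inv_apply (j : Fin n) {x : Fin n → ℝ} (hx : x j ≠ 0) :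
    HasFDerivAt (fun y : Fin n → ℝ => (y j)⁻¹)
      (-(x j ^ 2)⁻¹ • ContinuousLinearMap.proj (R := ℝ) (φ := fun _ : Fin n => ℝ) j) x :=
  (hasDerivAt_inv hx).comp_hasFDerivAt x (hasFDerivAt_apply j x)

lemma pd_inv_apply (k j : Fin n) {x : Fin n → ℝ} (hx : x j ≠ 0) :
    pd k (fun y => (y j)⁻¹) x = if j = k then -(x j ^ 2)⁻¹ else 0 := by
  rw [pd, (hasFDerivAt_inv_apply j hx).fderiv]
  simp [Pi.single_apply]

lemma pd_div_apply (k i j : Fin n) {x : Fin n → ℝ} (hx : x j ≠ 0) :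
    pd k (fun y => y i / y j) x =
      (if i = k then 1 / x j else 0) - (if j = k then x i / x j ^ 2 else 0) := by
  simp only [div_eq_mul_inv]
  have h : HasFDerivAt (fun y : Fin n → ℝ => y i * (y j)⁻¹) _ x :=
    (hasFDerivAt_apply i x).mul (hasFDerivAt_inv_apply j hx)
  rw [pd, h.fderiv]
  simp only [add_apply, smul_apply, ContinuousLinearMap.proj_apply, Pi.single_apply, smul_eq_mul]
  split_ifs <;> ring

lemma pd_eq_zero_of_eqOn_zero {U : Set (Fin n → ℝ)} (hU : IsOpen U) {f : (Fin n → ℝ) → ℝ}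
    (hf : Set.EqOn f 0 U) (k : Fin n) {x : Fin n → ℝ} (hx : x ∈ U) : pd k f x = 0 := by
  rw [pd, (hf.eventuallyEq_of_mem (hU.mem_nhds hx)).fderiv_eq]
  simp

end PartialDerivative

namespace TwoComponentOperator

def metric : Fin 2 → Fin 2 → Fin 2 → (Fin 2 → ℝ) → ℝ :=
  ![fun i j _ => if i = 0 ∧ j = 0 then 1 else 0,
    fun i j x => if i = 0 ∧ j = 0 then x 1 else 0]

noncomputable def coeff : Fin 2 → Fin 2 → Fin 2 → Fin 2 → (Fin 2 → ℝ) → ℝ :=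
  ![fun i j k x =>
      if i = 1 ∧ j = 0 ∧ k = 1 then 1 / x 0
      else if i = 0 ∧ j = 1 ∧ k = 1 then -(1 / x 0)
      else 0,
    fun i j k x =>
      if i = 0 ∧ j = 0 ∧ k = 1 then 1 / 2
      else if i = 1 ∧ j = 0 ∧ k = 1 then x 1 / x 0
      else if i = 0 ∧ j = 1 ∧ k = 1 then -(x 1 / x 0)
      else 0]

def domain : Set (Fin 2 → ℝ) := {x | x 0 ≠ 0}

lemma isOpen_domain : IsOpen domain :=
  isOpen_ne_fun (continuous_apply 0) continuous_const

lemma metric_symm (α i j : Fin 2) (x : Fin 2 → ℝ) : metric α i j x = metric α j i x := by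
  fin_cases α <;> simp [metric, and_comm]

lemma pd_metric (α i j k : Fin 2) (x : Fin 2 → ℝ) :
    pd k (metric α i j) x = coeff α i j k x + coeff α j i k x := by
  revert α i j k
  simp only [Fin.forall_fin_two]
  norm_num [metric, coeff, pd_apply]

lemma mokhov_a3 (α β i j r : Fin 2) (x : Fin 2 → ℝ) :
    (∑ s, (metric α s i x * coeff β j r s x - metric β s j x * coeff α i r s x))
      + (∑ s, (metric β s i x * coeff α j r s x - metric α s j x * coeff β i r s x)) = 0 := by
  revert α β i j r
  simp only [Fin.forall_fin_two, Fin.sum_univ_two]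
  simp [metric, coeff]

lemma mokhov_a4 (α β i j r : Fin 2) (x : Fin 2 → ℝ) :
    (∑ s, (metric α s i x * coeff β j r s x - metric β s j x * coeff α i r s x))
      + (∑ s, (metric α s j x * coeff β r i s x - metric β s r x * coeff α j i s x))
      + (∑ s, (metric α s r x * coeff β i j s x - metric β s i x * coeff α r j s x)) = 0 := by
  revert α β i j r
  simp only [Fin.forall_fin_two, Fin.sum_univ_two]
  simp [metric, coeff]

lemma mokA5_eqOn_zero (α β i j r q : Fin 2) :
    Set.EqOn (mokA5 metric coeff α β i j r q) 0 domain := by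
  intro x hx
  have hx : x 0 ≠ 0 := hx
  revert α β i j r q
  simp only [mokA5, Fin.forall_fin_two, Fin.sum_univ_two]
  and_intros <;> simp [metric, coeff, pd_inv_apply, pd_div_apply, hx] <;> ring

lemma mokhov_a6 {x : Fin 2 → ℝ} (hx : x ∈ domain) (α β i j r q : Fin 2) :
    ∑ s, (metric β s i x * pd s (coeff α j r q) x
          - coeff β i j s x * coeff α s r q x - coeff β i r s x * coeff α j s q x)
    = ∑ s, (metric α s j x * pd s (coeff β i r q) x
          - coeff α j i s x * coeff β s r q x - coeff β i s q x * coeff α j r s x) := by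
  have hx : x 0 ≠ 0 := hx
  revert α β i j r q
  simp only [Fin.forall_fin_two, Fin.sum_univ_two]
  and_intros <;> simp [metric, coeff, pd_inv_apply, pd_div_apply, hx] <;> ring

lemma cyclic_sum_coeff_mul_curl_eq_zero {x : Fin 2 → ℝ} (hx : x ∈ domain)
    (α β i j r q k : Fin 2) :
    (∑ s, coeff β s i q x * (pd s (coeff α j r k) x - pd k (coeff α j r s) x))
      + (∑ s, coeff β s j q x * (pd s (coeff α r i k) x - pd k (coeff α r i s) x))
      + (∑ s, coeff β s r q x * (pd s (coeff α i j k) x - pd k (coeff α i j s) x)) = 0 := by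
  have hx : x 0 ≠ 0 := hx
  revert α β i j r q k
  simp only [Fin.forall_fin_two, Fin.sum_univ_two]
  simp [coeff, pd_inv_apply, pd_div_apply, hx]

theorem mokhov : Mokhov 2 2 domain metric coeff := by
  refine ⟨fun x _ α i j => metric_symm α i j x, fun x _ α i j k => pd_metric α i j k x,
    fun x _ α β i j r => mokhov_a3 α β i j r x, fun x _ α β i j r => mokhov_a4 α β i j r x,
    fun x hx α β i j r q => ?_, fun x hx => mokhov_a6 hx, fun x hx α β i j r q k => ?_⟩
  · rw [mokA5_eqOn_zero α β i j r q hx, mokA5_eqOn_zero β α i j r q hx, Pi.zero_apply, add_zero]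
  · rw [pd_eq_zero_of_eqOn_zero isOpen_domain (mokA5_eqOn_zero α β i j r q) k hx,
      pd_eq_zero_of_eqOn_zero isOpen_domain (mokA5_eqOn_zero β α i j r k) q hx,
      cyclic_sum_coeff_mul_curl_eq_zero hx α β i j r q k,
      cyclic_sum_coeff_mul_curl_eq_zero hx β α i j r k q]
    simp

end TwoComponentOperator

/-- the two-component degenerate operator (2D_2cmpt_1) with ε = 1
satisfies Mokhov's conditions on the domain u¹ ≠ 0. -/
theorem stmt1
    (g : Fin 2 → Fin 2 → Fin 2 → (Fin 2 → ℝ) → ℝ)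
    (b : Fin 2 → Fin 2 → Fin 2 → Fin 2 → (Fin 2 → ℝ) → ℝ)
    (hgx : ∀ i j x, g 0 i j x = if i = 0 ∧ j = 0 then 1 else 0)
    (hgy : ∀ i j x, g 1 i j x = if i = 0 ∧ j = 0 then x 1 else 0)
    (hbx : ∀ i j k x, b 0 i j k x =
      if i = 1 ∧ j = 0 ∧ k = 1 then 1 / x 0
      else if i = 0 ∧ j = 1 ∧ k = 1 then -(1 / x 0)
      else 0)
    (hby : ∀ i j k x, b 1 i j k x =
      if i = 0 ∧ j = 0 ∧ k = 1 then 1 / 2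
      else if i = 1 ∧ j = 0 ∧ k = 1 then x 1 / x 0
      else if i = 0 ∧ j = 1 ∧ k = 1 then -(x 1 / x 0)
      else 0) :
    Mokhov 2 2 {x | x 0 ≠ 0} g b := by
  have hg : g = TwoComponentOperator.metric := by
    funext α i j x
    fin_cases α
    exacts [hgx i j x, hgy i j x]
  have hb : b = TwoComponentOperator.coeff := by
    funext α i j k x
    fin_cases α
    exacts [hbx i j k x, hby i j k x]
  subst hg hb
  exact TwoComponentOperator.mokhov
end

section
/- For the two-component 2D operator with x-part metric g = diag(1,0), zero x-part b-coefficients, and y-part metric g̃ = diag(f(u^1,u^2), 0), Mokhov's conditions force f to be independent of u^1 (i.e., ∂f/∂u^1 = 0), and the only nonzero y-part coefficient is b̃^{11}_2 = f'(u^2)/2. -/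
open scoped BigOperators

/-- for the two-component 2D operator with x-part g = diag(1,0), b = 0
and y-part metric diag(f,0), Mokhov's conditions force ∂f/∂u¹ = 0 and the only
nonzero y-part coefficient is b̃¹¹₂ = f'/2. -/
theorem stmt2
    (f : (Fin 2 → ℝ) → ℝ) (hf : ContDiff ℝ (⊤ : ℕ∞) f)
    (g : Fin 2 → Fin 2 → Fin 2 → (Fin 2 → ℝ) → ℝ)
    (b : Fin 2 → Fin 2 → Fin 2 → Fin 2 → (Fin 2 → ℝ) → ℝ)
    (hgx : ∀ i j x, g 0 i j x = if i = 0 ∧ j = 0 then 1 else 0)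
    (hgy : ∀ i j x, g 1 i j x = if i = 0 ∧ j = 0 then f x else 0)
    (hbx : ∀ i j k x, b 0 i j k x = 0)
    (hby : ∀ i j k, ContDiff ℝ (⊤ : ℕ∞) (b 1 i j k))
    (hM : Mokhov 2 2 Set.univ g b) :
    ∀ x : Fin 2 → ℝ,
      pd 0 f x = 0 ∧
      b 1 0 0 1 x = pd 1 f x / 2 ∧
      (∀ i j k : Fin 2, ¬(i = 0 ∧ j = 0 ∧ k = 1) → b 1 i j k x = 0) := by

  obtain ⟨a1, a2, a3, a4, a5, a6, a7⟩ := hM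
  have hg100 : g 1 0 0 = f := funext fun x => by simp [hgy]
  have hg101 : g 1 0 1 = fun _ => (0:ℝ) := funext fun x => by simp [hgy]
  have hg111 : g 1 1 1 = fun _ => (0:ℝ) := funext fun x => by simp [hgy]
  intro x
  have e00 : ∀ k, pd k f x = b 1 0 0 k x + b 1 0 0 k x := by
    intro k; have h := a2 x trivial 1 0 0 k; rwa [hg100] at h
  have e01 : ∀ k, b 1 0 1 k x + b 1 1 0 k x = 0 := by
    intro k; have h := a2 x trivial 1 0 1 k; rw [hg101] at h
    simp [pd] at h; linarith
  have e11 : ∀ k, b 1 1 1 k x = 0 := by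
    intro k; have h := a2 x trivial 1 1 1 k; rw [hg111] at h
    simp [pd] at h; linarith
  have e3 : ∀ r, b 1 1 r 0 x = 0 := by
    intro r; have h := a3 x trivial 0 1 0 1 r
    simp [Fin.sum_univ_two, hgx, hgy, hbx] at h
    exact h
  have e4 : b 1 0 0 0 x = 0 := by
    have h := a4 x trivial 0 1 0 0 0
    simp [Fin.sum_univ_two, hgx, hgy, hbx] at h
    linarith
  have e6a : pd 0 (b 1 1 0 1) x = 0 := by
    have h := a6 x trivial 1 0 0 1 0 1
    simp [Fin.sum_univ_two, hgx, hgy, hbx] at h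
    exact h
  have h010 : b 1 0 1 0 x = 0 := by have h := e01 0; have h' := e3 0; linarith
  have hd : b 1 1 0 1 x = 0 := by
    have h6 := a6 x trivial 1 1 0 1 0 1
    simp [Fin.sum_univ_two, hgx, hgy, hbx] at h6
    rw [e6a, e4, e11 1, e3 0, h010] at h6
    have hdd : b 1 1 0 1 x * b 1 1 0 1 x = 0 := by ring_nf at h6 ⊢; linarith
    exact mul_self_eq_zero.mp hdd
  have hc : b 1 0 1 1 x = 0 := by have h := e01 1; linarith
  refine ⟨by have := e00 0; linarith, by have := e00 1; linarith, ?_⟩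
  intro i j k hn
  fin_cases i <;> fin_cases j <;> fin_cases k <;>
    first
      | exact e4
      | exact (hn ⟨rfl, rfl, rfl⟩).elim
      | exact h010
      | exact hc
      | exact e3 0
      | exact hd
      | exact e11 0
      | exact e11 1
end

section
/- The three-component operator P with only nonzero entries P^{12} = u^3_x + u^1 u^3_y and P^{21} = −(u^3_x + u^1 u^3_y) satisfies Mokhov's conditions (a1)–(a7) for a 2D Hamiltonian operator; in particular, its metrics are both identically zero (g = g̃ = 0), the x-part coefficients are b^{12}_3 = −b^{21}_3 = 1, and the y-part coefficients are b̃^{12}_3 = −b̃^{21}_3 = u^1, all other coefficients vanishing. -/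
open scoped BigOperators

/-!
The metrics vanish and every coefficient factors as `b α i j k = c α * T i j k` for a constant
tensor `T` that is antisymmetric in `i, j` and nilpotent, `T i j s * T s r q = 0`. Then every
product of two coefficients contracted along an index vanishes, which disposes of (a1)–(a6) and
of the quadratic part of (a7). What is left of (a7) is `c β * ∑ s, ∂ₛ c α * (cyclic sum over i, j, r of
T s i q * T j r k)`. Here `c = (1, u¹)` and `T i j k = (e⁰ ∧ e¹) i j * δ k 2` (`wedge01`,
`coeffTensor`); for each `s` that cyclic sum is then a 3-form on the span of `e₀, e₁`, hence zero.
-/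

open Finset

lemma pd_zero {n : ℕ} (k : Fin n) (x : Fin n → ℝ) : pd k (fun _ => 0) x = 0 := by
  simp [pd]

lemma pd_mul_const {n : ℕ} (k : Fin n) (f : (Fin n → ℝ) → ℝ) (t : ℝ) (x : Fin n → ℝ) :
    pd k (fun y => f y * t) x = pd k f x * t := by
  have hf : (fun y => f y * t) = t • f := by
    ext y
    simp [mul_comm]
  rw [pd, pd, hf, fderiv_const_smul_field]
  exact mul_comm _ _

section FactoredCoefficients

variable {d n : ℕ} {g : Fin d → Fin n → Fin n → (Fin n → ℝ) → ℝ}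
  {b : Fin d → Fin n → Fin n → Fin n → (Fin n → ℝ) → ℝ}
  {c : Fin d → (Fin n → ℝ) → ℝ} {T : Fin n → Fin n → Fin n → ℝ}

lemma mul_mul_eq_zero_of_antisymm_of_nilpotent (hT : ∀ i j k, T j i k = -T i j k)
    (hTT : ∀ i j s r q, T i j s * T s r q = 0) (i r s j q : Fin n) :
    T i r s * T j s q = 0 := by
  linear_combination T i r s * hT s j q - hTT i r s j q

lemma mokA5_eq_zero (hg : ∀ α i j x, g α i j x = 0)
    (hb : ∀ α i j k x, b α i j k x = c α x * T i j k)
    (hTT : ∀ i j s r q, T i j s * T s r q = 0) (α β : Fin d) (i j r q : Fin n) :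
    mokA5 g b α β i j r q = fun _ => 0 := by
  ext x
  refine sum_eq_zero fun s _ => ?_
  rw [hg, hb, hb, hb, hb]
  linear_combination (c α x * c β x) * (hTT i j s r q - hTT i r s j q)

lemma sum_mul_pd_sub_pd_eq (hb : ∀ α i j k x, b α i j k x = c α x * T i j k)
    (hTT : ∀ i j s r q, T i j s * T s r q = 0) (α β : Fin d) (i j r q k : Fin n)
    (x : Fin n → ℝ) :
    ∑ s, b β s i q x * (pd s (b α j r k) x - pd k (b α j r s) x)
      = c β x * ∑ s, pd s (c α) x * (T s i q * T j r k) := by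
  have hbf : ∀ α i j k, b α i j k = fun y => c α y * T i j k := fun α i j k => funext (hb α i j k)
  simp only [hbf, pd_mul_const, mul_sum]
  refine sum_congr rfl fun s _ => ?_
  linear_combination (-(c β x * pd k (c α) x)) * hTT j r s i q

lemma cyclic_sum_mul_pd_sub_pd_eq_zero (hb : ∀ α i j k x, b α i j k x = c α x * T i j k)
    (hTT : ∀ i j s r q, T i j s * T s r q = 0)
    (hcyc : ∀ s i j r q k, T s i q * T j r k + T s j q * T r i k + T s r q * T i j k = 0)
    (α β : Fin d) (i j r q k : Fin n) (x : Fin n → ℝ) :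
    (∑ s, b β s i q x * (pd s (b α j r k) x - pd k (b α j r s) x))
      + (∑ s, b β s j q x * (pd s (b α r i k) x - pd k (b α r i s) x))
      + (∑ s, b β s r q x * (pd s (b α i j k) x - pd k (b α i j s) x)) = 0 := by
  simp only [sum_mul_pd_sub_pd_eq hb hTT, ← mul_add, ← sum_add_distrib]
  refine mul_eq_zero_of_right _ (sum_eq_zero fun s _ => ?_)
  linear_combination pd s (c α) x * hcyc s i j r q k

theorem mokhov_of_zero_metric_of_factored (U : Set (Fin n → ℝ))
    (hg : ∀ α i j x, g α i j x = 0)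
    (hb : ∀ α i j k x, b α i j k x = c α x * T i j k)
    (hT : ∀ i j k, T j i k = -T i j k)
    (hTT : ∀ i j s r q, T i j s * T s r q = 0)
    (hcyc : ∀ s i j r q k, T s i q * T j r k + T s j q * T r i k + T s r q * T i j k = 0) :
    Mokhov d n U g b := by
  have hTT' := mul_mul_eq_zero_of_antisymm_of_nilpotent hT hTT
  have hg' : ∀ α i j, g α i j = fun _ => 0 := fun α i j => funext (hg α i j)
  refine ⟨fun x _ α i j => by rw [hg, hg], fun x _ α i j k => ?_, fun x _ α β i j r => ?_,
    fun x _ α β i j r => ?_, fun x _ α β i j r q => ?_, fun x _ α β i j r q => ?_,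
    fun x _ α β i j r q k => ?_⟩
  · rw [hg', pd_zero, hb, hb, hT]
    ring
  · simp [hg]
  · simp [hg]
  · simp [mokA5_eq_zero hg hb hTT]
  · refine (sum_eq_zero fun s _ => ?_).trans (sum_eq_zero fun s _ => ?_).symm
    · rw [hg, hb, hb, hb, hb]
      linear_combination (-(c β x * c α x)) * (hTT i j s r q + hTT' i r s j q)
    · rw [hg, hb, hb, hb, hb]
      linear_combination (-(c α x * c β x)) * (hTT j i s r q + hTT' j r s i q)
  · rw [mokA5_eq_zero hg hb hTT, mokA5_eq_zero hg hb hTT, pd_zero, pd_zero,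
      cyclic_sum_mul_pd_sub_pd_eq_zero hb hTT hcyc, cyclic_sum_mul_pd_sub_pd_eq_zero hb hTT hcyc]
    ring

end FactoredCoefficients

def wedge01 (i j : Fin 3) : ℝ :=
  if i = 0 ∧ j = 1 then 1 else if i = 1 ∧ j = 0 then -1 else 0

def coeffTensor (i j k : Fin 3) : ℝ :=
  if k = 2 then wedge01 i j else 0

lemma wedge01_antisymm (i j : Fin 3) : wedge01 j i = -wedge01 i j := by
  fin_cases i <;> fin_cases j <;> simp [wedge01]

lemma wedge01_two_left (j : Fin 3) : wedge01 2 j = 0 := by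
  simp [wedge01]

lemma wedge01_cyclic (s i j r : Fin 3) :
    wedge01 s i * wedge01 j r + wedge01 s j * wedge01 r i + wedge01 s r * wedge01 i j = 0 := by
  fin_cases s <;> fin_cases i <;> fin_cases j <;> fin_cases r <;> simp [wedge01]

lemma coeffTensor_antisymm (i j k : Fin 3) : coeffTensor j i k = -coeffTensor i j k := by
  simp only [coeffTensor, wedge01_antisymm i j]
  split_ifs <;> simp

lemma coeffTensor_mul_coeffTensor (i j s r q : Fin 3) :
    coeffTensor i j s * coeffTensor s r q = 0 := by
  by_cases hs : s = 2
  · simp [hs, coeffTensor, wedge01_two_left]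
  · simp [hs, coeffTensor]

lemma coeffTensor_cyclic (s i j r q k : Fin 3) :
    coeffTensor s i q * coeffTensor j r k + coeffTensor s j q * coeffTensor r i k
      + coeffTensor s r q * coeffTensor i j k = 0 := by
  unfold coeffTensor
  split_ifs
  · exact wedge01_cyclic s i j r
  all_goals simp

/-- the three-component operator with zero metrics,
b¹²₃ = -b²¹₃ = 1 (x-part) and b̃¹²₃ = -b̃²¹₃ = u¹ (y-part)
satisfies Mokhov's conditions (a1)–(a7). -/
theorem stmt10
    (g : Fin 2 → Fin 3 → Fin 3 → (Fin 3 → ℝ) → ℝ)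
    (b : Fin 2 → Fin 3 → Fin 3 → Fin 3 → (Fin 3 → ℝ) → ℝ)
    (hg : ∀ α i j x, g α i j x = 0)
    (hbx : ∀ i j k x, b 0 i j k x =
      if i = 0 ∧ j = 1 ∧ k = 2 then 1
      else if i = 1 ∧ j = 0 ∧ k = 2 then -1
      else 0)
    (hby : ∀ i j k x, b 1 i j k x =
      if i = 0 ∧ j = 1 ∧ k = 2 then x 0
      else if i = 1 ∧ j = 0 ∧ k = 2 then -(x 0)
      else 0) :
    Mokhov 2 3 Set.univ g b := by
  have hb : ∀ α i j k x, b α i j k x = ![fun _ => 1, fun y => y 0] α x * coeffTensor i j k := by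
    intro α i j k x
    obtain rfl | rfl : α = 0 ∨ α = 1 := by omega
    all_goals
      simp only [hbx, hby, coeffTensor, wedge01]
      split_ifs <;> simp_all
  exact mokhov_of_zero_metric_of_factored Set.univ hg hb coeffTensor_antisymm
    coeffTensor_mul_coeffTensor coeffTensor_cyclic
end

section
/- Under the change of dependent variables u^1 = √(v^3/φ(v^3)) v^1 + c/√(φ(v^3)), u^2 = √(φ(v^3)/v^3) v^2 + c√(φ(v^3)), u^3 = φ(v^3) (with c constant, φ smooth, φ, v^3 > 0), the metric g = [[0,1,0],[1,0,0],[0,0,0]] transforms into itself under the tensor transformation law g^{ij}(v) = (∂v^i/∂u^a)(∂v^j/∂u^b) g^{ab}(u), and a function p(u^3) in the coefficient g̃^{11} = p transforms into φ(v^3)·p(φ(v^3))/v^3. -/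
open Matrix


private lemma key_r (r : ℝ → ℝ) (w : Fin 3 → ℝ)
    (hr : DifferentiableAt ℝ r (w 2)) (i : Fin 3) (hi : i ≠ 2) :
    fderiv ℝ (fun z : Fin 3 → ℝ => r (z 2)) w (Pi.single i 1) = 0 := by
  have hp : HasFDerivAt (fun z : Fin 3 → ℝ => z 2)
      (ContinuousLinearMap.proj (R := ℝ) (φ := fun _ : Fin 3 => ℝ) 2) w :=
    hasFDerivAt_apply 2 w
  have h : HasFDerivAt (fun z : Fin 3 → ℝ => r (z 2))
      ((fderiv ℝ r (w 2)).comp (ContinuousLinearMap.proj 2)) w :=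
    hr.hasFDerivAt.comp w hp
  rw [h.fderiv]
  simp [Pi.single_apply, hi]

private lemma key_mul (q r : ℝ → ℝ) (w : Fin 3 → ℝ)
    (hq : DifferentiableAt ℝ q (w 2)) (hr : DifferentiableAt ℝ r (w 2))
    (j : Fin 3) (i : Fin 3) (hi : i ≠ 2) :
    fderiv ℝ (fun z : Fin 3 → ℝ => q (z 2) * z j + r (z 2)) w (Pi.single i 1)
      = if j = i then q (w 2) else 0 := by
  have hp2 : HasFDerivAt (fun z : Fin 3 → ℝ => z 2)
      (ContinuousLinearMap.proj (R := ℝ) (φ := fun _ : Fin 3 => ℝ) 2) w :=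
    hasFDerivAt_apply 2 w
  have hpj : HasFDerivAt (fun z : Fin 3 → ℝ => z j)
      (ContinuousLinearMap.proj (R := ℝ) (φ := fun _ : Fin 3 => ℝ) j) w :=
    hasFDerivAt_apply j w
  have hA : HasFDerivAt (fun z : Fin 3 → ℝ => q (z 2))
      ((fderiv ℝ q (w 2)).comp (ContinuousLinearMap.proj 2)) w :=
    hq.hasFDerivAt.comp w hp2
  have hB : HasFDerivAt (fun z : Fin 3 → ℝ => r (z 2))
      ((fderiv ℝ r (w 2)).comp (ContinuousLinearMap.proj 2)) w :=
    hr.hasFDerivAt.comp w hp2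
  have h := (hA.mul hpj).add hB
  rw [show (fun z : Fin 3 → ℝ => q (z 2) * z j + r (z 2)) = ((fun z : Fin 3 → ℝ => q (z 2)) * fun z => z j) + fun z => r (z 2) from rfl, h.fderiv]
  by_cases hji : j = i <;> simp [Pi.single_apply, hi, hji]

/-- the change of variables u¹ = √(v³/φ(v³)) v¹ + c/√(φ(v³)),
u² = √(φ(v³)/v³) v² + c√(φ(v³)), u³ = φ(v³) preserves the contravariant metric
[[0,1,0],[1,0,0],[0,0,0]] under the tensor law g(u) = J ĝ(v) Jᵀ (J = ∂u/∂v), and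
transforms the coefficient g̃¹¹ = p(u³) into φ(v³)·p(φ(v³))/v³. -/
theorem stmt12 (c : ℝ) (φ p : ℝ → ℝ)
    (hφ : ContDiff ℝ (⊤ : ℕ∞) φ)
    (Φ : (Fin 3 → ℝ) → Fin 3 → ℝ)
    (hΦ : ∀ w : Fin 3 → ℝ, Φ w =
      ![Real.sqrt (w 2 / φ (w 2)) * w 0 + c / Real.sqrt (φ (w 2)),
        Real.sqrt (φ (w 2) / w 2) * w 1 + c * Real.sqrt (φ (w 2)),
        φ (w 2)])
    (J : (Fin 3 → ℝ) → Matrix (Fin 3) (Fin 3) ℝ)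
    (hJ : ∀ (w : Fin 3 → ℝ) (a i : Fin 3),
      J w a i = fderiv ℝ (fun z => Φ z a) w (Pi.single i 1))
    (g0 : Matrix (Fin 3) (Fin 3) ℝ)
    (hg0 : g0 = !![0,1,0;1,0,0;0,0,0]) :
    ∀ w : Fin 3 → ℝ, 0 < w 2 → 0 < φ (w 2) →
      J w * g0 * (J w)ᵀ = g0 ∧
      J w * ((φ (w 2) * p (φ (w 2)) / w 2) •
          (!![1,0,0;0,0,0;0,0,0] : Matrix (Fin 3) (Fin 3) ℝ)) * (J w)ᵀ
        = p (φ (w 2)) • (!![1,0,0;0,0,0;0,0,0] : Matrix (Fin 3) (Fin 3) ℝ) := by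
  intro w hw hφw
  have hwne : w 2 ≠ 0 := ne_of_gt hw
  have hφne : φ (w 2) ≠ 0 := ne_of_gt hφw
  have hφd : DifferentiableAt ℝ φ (w 2) := (hφ.differentiable (by simp)) (w 2)
  -- differentiability of the coefficient functions
  have hq0 : DifferentiableAt ℝ (fun t => Real.sqrt (t / φ t)) (w 2) :=
    DifferentiableAt.sqrt ((differentiableAt_fun_id).div hφd hφne) (by positivity)
  have hr0 : DifferentiableAt ℝ (fun t => c / Real.sqrt (φ t)) (w 2) :=
    (differentiableAt_const c).div (hφd.sqrt hφne) (by positivity)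
  have hq1 : DifferentiableAt ℝ (fun t => Real.sqrt (φ t / t)) (w 2) :=
    DifferentiableAt.sqrt (hφd.div differentiableAt_fun_id hwne) (by positivity)
  have hr1 : DifferentiableAt ℝ (fun t => c * Real.sqrt (φ t)) (w 2) :=
    (differentiableAt_const c).mul (hφd.sqrt hφne)
  -- the entries of J in columns 0 and 1
  have e0 : (fun z : Fin 3 → ℝ => Φ z 0)
      = fun z => Real.sqrt (z 2 / φ (z 2)) * z 0 + c / Real.sqrt (φ (z 2)) := by
    funext z; rw [hΦ z]; simp
  have e1 : (fun z : Fin 3 → ℝ => Φ z 1)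
      = fun z => Real.sqrt (φ (z 2) / z 2) * z 1 + c * Real.sqrt (φ (z 2)) := by
    funext z; rw [hΦ z]; simp
  have e2 : (fun z : Fin 3 → ℝ => Φ z 2) = fun z => φ (z 2) := by
    funext z; rw [hΦ z]; simp
  have h00 : J w 0 0 = Real.sqrt (w 2 / φ (w 2)) := by
    rw [hJ, e0, key_mul _ _ _ hq0 hr0 0 0 (by decide)]; simp
  have h01 : J w 0 1 = 0 := by
    rw [hJ, e0, key_mul _ _ _ hq0 hr0 0 1 (by decide)]; simp
  have h10 : J w 1 0 = 0 := by
    rw [hJ, e1, key_mul _ _ _ hq1 hr1 1 0 (by decide)]; simp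
  have h11 : J w 1 1 = Real.sqrt (φ (w 2) / w 2) := by
    rw [hJ, e1, key_mul _ _ _ hq1 hr1 1 1 (by decide)]; simp
  have h20 : J w 2 0 = 0 := by rw [hJ, e2, key_r _ _ hφd 0 (by decide)]
  have h21 : J w 2 1 = 0 := by rw [hJ, e2, key_r _ _ hφd 1 (by decide)]
  have hAB : Real.sqrt (w 2 / φ (w 2)) * Real.sqrt (φ (w 2) / w 2) = 1 := by
    rw [← Real.sqrt_mul (by positivity)]
    rw [show (w 2 / φ (w 2)) * (φ (w 2) / w 2) = 1 by field_simp]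
    exact Real.sqrt_one
  have hAA : Real.sqrt (w 2 / φ (w 2)) * Real.sqrt (w 2 / φ (w 2))
      * (φ (w 2) * p (φ (w 2)) / w 2) = p (φ (w 2)) := by
    rw [Real.mul_self_sqrt (by positivity)]
    field_simp
  have hJmat : J w = !![Real.sqrt (w 2 / φ (w 2)), 0, J w 0 2;
      0, Real.sqrt (φ (w 2) / w 2), J w 1 2; 0, 0, J w 2 2] := by
    ext i j
    fin_cases i <;> fin_cases j <;>
      simp [h00, h01, h10, h11, h20, h21, Matrix.vecHead, Matrix.vecTail]
  have hsm : (φ (w 2) * p (φ (w 2)) / w 2) •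
      (!![1,0,0;0,0,0;0,0,0] : Matrix (Fin 3) (Fin 3) ℝ)
      = !![φ (w 2) * p (φ (w 2)) / w 2,0,0;0,0,0;0,0,0] := by
    ext i j
    fin_cases i <;> fin_cases j <;>
      simp [Matrix.vecHead, Matrix.vecTail]
  have hsm2 : p (φ (w 2)) •
      (!![1,0,0;0,0,0;0,0,0] : Matrix (Fin 3) (Fin 3) ℝ)
      = !![p (φ (w 2)),0,0;0,0,0;0,0,0] := by
    ext i j
    fin_cases i <;> fin_cases j <;>
      simp [Matrix.vecHead, Matrix.vecTail]
  have hT : (!![Real.sqrt (w 2 / φ (w 2)), 0, J w 0 2;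
      0, Real.sqrt (φ (w 2) / w 2), J w 1 2; 0, 0, J w 2 2])ᵀ
      = !![Real.sqrt (w 2 / φ (w 2)), 0, 0;
      0, Real.sqrt (φ (w 2) / w 2), 0; J w 0 2, J w 1 2, J w 2 2] := by
    ext i j
    fin_cases i <;> fin_cases j <;>
      simp [Matrix.vecHead, Matrix.vecTail]
  constructor
  · rw [hJmat, hg0, hT, Matrix.mul_fin_three, Matrix.mul_fin_three]
    ext i j
    fin_cases i <;> fin_cases j <;>
      simp [Matrix.vecHead, Matrix.vecTail] <;>
      linear_combination hAB
  · rw [hJmat, hsm, hsm2, hT, Matrix.mul_fin_three, Matrix.mul_fin_three]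
    ext i j
    fin_cases i <;> fin_cases j <;>
      simp [Matrix.vecHead, Matrix.vecTail] <;>
      linear_combination hAA
end

section
/- Let λ^i, μ^i, v^i (i = 1,…,m) be smooth functions of R = (R^1,…,R^m) satisfying Tsarev's linear system ∂_j v^i/(v^j − v^i) = ∂_j λ^i/(λ^j − λ^i) = ∂_j μ^i/(μ^j − μ^i) for all i ≠ j. If R(t,x,y) is a smooth solution of the implicit hodograph system v^i(R) = x + λ^i(R) t + μ^i(R) y (i = 1,…,m) with the relevant Jacobian nondegenerate, then R solves both diagonal systems R^i_t = λ^i(R) R^i_x and R^i_y = μ^i(R) R^i_x. -/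
lemma clm_sum {m : ℕ} (D : (Fin m → ℝ) →L[ℝ] ℝ) (w : Fin m → ℝ) :
    D w = ∑ j, w j * D (Pi.single j 1) := by
  conv_lhs => rw [← Finset.univ_sum_single w, map_sum]
  refine Finset.sum_congr rfl fun j _ => ?_
  have : Pi.single j (w j) = w j • (Pi.single j 1 : Fin m → ℝ) := by
    rw [← Pi.single_smul, smul_eq_mul, mul_one]
  rw [this, map_smul, smul_eq_mul]

/-- the generalized hodograph formula in 2+1 dimensions. If v, λ, μ
satisfy Tsarev's linear system and R(t,x,y) solves the implicit hodograph system
vⁱ(R) = x + λⁱ(R) t + μⁱ(R) y with nondegenerate Jacobian, then R solves the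
diagonal systems Rⁱ_t = λⁱ Rⁱ_x and Rⁱ_y = μⁱ Rⁱ_x. -/
theorem stmt15 {m : ℕ}
    (lam mu vv : Fin m → (Fin m → ℝ) → ℝ)
    (hlam : ∀ i, ContDiff ℝ (⊤ : ℕ∞) (lam i)) (hmu : ∀ i, ContDiff ℝ (⊤ : ℕ∞) (mu i))
    (hvv : ∀ i, ContDiff ℝ (⊤ : ℕ∞) (vv i))
    (hne : ∀ i j, i ≠ j → ∀ R,
      lam i R ≠ lam j R ∧ mu i R ≠ mu j R ∧ vv i R ≠ vv j R)
    (htsarev : ∀ i j, i ≠ j → ∀ R,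
      pd j (vv i) R / (vv j R - vv i R) = pd j (lam i) R / (lam j R - lam i R) ∧
      pd j (lam i) R / (lam j R - lam i R) = pd j (mu i) R / (mu j R - mu i R))
    (R : ℝ → ℝ → ℝ → Fin m → ℝ)
    (hR : ContDiff ℝ (⊤ : ℕ∞) (fun p : Fin 3 → ℝ => R (p 0) (p 1) (p 2)))
    (hhodo : ∀ i t x y, vv i (R t x y) = x + lam i (R t x y) * t + mu i (R t x y) * y)
    (hjac : ∀ t x y,
      (Matrix.of (fun i j : Fin m =>
        pd j (vv i) (R t x y) - t * pd j (lam i) (R t x y)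
          - y * pd j (mu i) (R t x y))).det ≠ 0) :
    ∀ i t x y,
      deriv (fun s => R s x y i) t = lam i (R t x y) * deriv (fun s => R t s y i) x ∧
      deriv (fun s => R t x s i) y = mu i (R t x y) * deriv (fun s => R t s y i) x := by
  intro i t x y
  set F : (Fin 3 → ℝ) → (Fin m → ℝ) := fun p => R (p 0) (p 1) (p 2) with hF
  set R0 : Fin m → ℝ := R t x y with hR0
  set A : Fin m → Fin m → ℝ := fun i j =>
    pd j (vv i) R0 - t * pd j (lam i) R0 - y * pd j (mu i) R0 with hA
  -- off-diagonal entries vanish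
  have hoff : ∀ k j, k ≠ j → A k j = 0 := by
    intro k j hkj
    obtain ⟨h1, h2⟩ := htsarev k j hkj R0
    obtain ⟨hlne, hmne, hvne⟩ := hne k j hkj R0
    have hdv : vv j R0 - vv k R0 ≠ 0 := sub_ne_zero_of_ne (Ne.symm hvne)
    have hdl : lam j R0 - lam k R0 ≠ 0 := sub_ne_zero_of_ne (Ne.symm hlne)
    have hdm : mu j R0 - mu k R0 ≠ 0 := sub_ne_zero_of_ne (Ne.symm hmne)
    have hb : pd j (vv k) R0 * (lam j R0 - lam k R0)
        = pd j (lam k) R0 * (vv j R0 - vv k R0) := (div_eq_div_iff hdv hdl).mp h1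
    have hc : pd j (vv k) R0 * (mu j R0 - mu k R0)
        = pd j (mu k) R0 * (vv j R0 - vv k R0) := (div_eq_div_iff hdv hdm).mp (h1.trans h2)
    have hj := hhodo j t x y
    have hk := hhodo k t x y
    rw [← hR0] at hj hk
    have key : A k j * (vv j R0 - vv k R0) = 0 := by
      simp only [hA]
      linear_combination t * hb + y * hc + pd j (vv k) R0 * hj - pd j (vv k) R0 * hk
    exact (mul_eq_zero.mp key).resolve_right hdv
  -- diagonal entries are nonzero
  have hAne : A i i ≠ 0 := by
    have hdet := hjac t x y
    rw [← hR0] at hdet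
    have hdiag : (Matrix.of A) = Matrix.diagonal (fun k => A k k) := by
      ext a b
      by_cases hab : a = b
      · subst hab; simp [Matrix.diagonal]
      · simp [Matrix.diagonal_apply_ne _ hab, Matrix.of_apply, hoff a b hab]
    rw [show (Matrix.of fun i j : Fin m =>
        pd j (vv i) R0 - t * pd j (lam i) R0 - y * pd j (mu i) R0) = Matrix.of A from rfl,
      hdiag, Matrix.det_diagonal] at hdet
    exact Finset.prod_ne_zero_iff.mp hdet i (Finset.mem_univ i)
  -- key algebraic consequence of one directional differentiation
  have key : ∀ (w : Fin m → ℝ) (T' X' Y' : ℝ),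
      fderiv ℝ (vv i) R0 w = X' + fderiv ℝ (lam i) R0 w * t + lam i R0 * T'
        + fderiv ℝ (mu i) R0 w * y + mu i R0 * Y' →
      A i i * w i = X' + lam i R0 * T' + mu i R0 * Y' := by
    intro w T' X' Y' h
    rw [clm_sum, clm_sum, clm_sum] at h
    have hsum : ∑ j, w j * A i j = A i i * w i := by
      rw [Finset.sum_eq_single_of_mem i (Finset.mem_univ i)
        (fun b _ hb => by rw [hoff i b (Ne.symm hb), mul_zero])]
      ring
    have hexp : ∑ j, w j * A i j
        = (∑ j, w j * fderiv ℝ (vv i) R0 (Pi.single j 1))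
          - t * (∑ j, w j * fderiv ℝ (lam i) R0 (Pi.single j 1))
          - y * (∑ j, w j * fderiv ℝ (mu i) R0 (Pi.single j 1)) := by
      rw [Finset.mul_sum, Finset.mul_sum, ← Finset.sum_sub_distrib, ← Finset.sum_sub_distrib]
      refine Finset.sum_congr rfl fun j _ => ?_
      simp only [hA, pd]; ring
    rw [← hsum, hexp]
    linarith [h]
  -- differentiability facts
  have hFd : DifferentiableAt ℝ F ![t, x, y] := (hR.differentiable (by simp)) _
  have hvd : ∀ f : Fin m → (Fin m → ℝ) → ℝ, (∀ k, ContDiff ℝ (⊤ : ℕ∞) (f k)) →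
      HasFDerivAt (f i) (fderiv ℝ (f i) R0) R0 :=
    fun f hf => ((hf i).differentiable (by simp) R0).hasFDerivAt
  have hvvd := hvd vv hvv
  have hlamd := hvd lam hlam
  have hmud := hvd mu hmu
  -- the three coordinate curves
  have hL0 : HasDerivAt (fun s : ℝ => (![s, x, y] : Fin 3 → ℝ)) (Pi.single 0 1) t := by
    rw [hasDerivAt_pi]
    intro k
    fin_cases k
    · simpa using hasDerivAt_id' t
    · simpa using hasDerivAt_const t x
    · simpa using hasDerivAt_const t y
  have hL1 : HasDerivAt (fun s : ℝ => (![t, s, y] : Fin 3 → ℝ)) (Pi.single 1 1) x := by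
    rw [hasDerivAt_pi]
    intro k
    fin_cases k
    · simpa using hasDerivAt_const x t
    · simpa using hasDerivAt_id' x
    · simpa using hasDerivAt_const x y
  have hL2 : HasDerivAt (fun s : ℝ => (![t, x, s] : Fin 3 → ℝ)) (Pi.single 2 1) y := by
    rw [hasDerivAt_pi]
    intro k
    fin_cases k
    · simpa using hasDerivAt_const y t
    · simpa using hasDerivAt_const y x
    · simpa using hasDerivAt_id' y
  set w0 : Fin m → ℝ := fderiv ℝ F ![t, x, y] (Pi.single 0 1) with hw0
  set w1 : Fin m → ℝ := fderiv ℝ F ![t, x, y] (Pi.single 1 1) with hw1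
  set w2 : Fin m → ℝ := fderiv ℝ F ![t, x, y] (Pi.single 2 1) with hw2
  have hg0 : HasDerivAt (fun s => R s x y) w0 t := by
    have := hFd.hasFDerivAt.comp_hasDerivAt t hL0
    simpa [Function.comp_def, hF] using this
  have hg1 : HasDerivAt (fun s => R t s y) w1 x := by
    have := hFd.hasFDerivAt.comp_hasDerivAt x hL1
    simpa [Function.comp_def, hF] using this
  have hg2 : HasDerivAt (fun s => R t x s) w2 y := by
    have := hFd.hasFDerivAt.comp_hasDerivAt y hL2
    simpa [Function.comp_def, hF] using this
  -- component derivatives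
  have hg0i : HasDerivAt (fun s => R s x y i) (w0 i) t := (hasDerivAt_pi.mp hg0) i
  have hg1i : HasDerivAt (fun s => R t s y i) (w1 i) x := (hasDerivAt_pi.mp hg1) i
  have hg2i : HasDerivAt (fun s => R t x s i) (w2 i) y := (hasDerivAt_pi.mp hg2) i
  -- differentiate the hodograph relation in each direction
  -- t-direction
  have hvt : HasDerivAt (fun s => vv i (R s x y)) (fderiv ℝ (vv i) R0 w0) t := by
    have := hvvd.comp_hasDerivAt t hg0
    simpa [Function.comp_def] using this
  have hlt : HasDerivAt (fun s => lam i (R s x y)) (fderiv ℝ (lam i) R0 w0) t := by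
    have := hlamd.comp_hasDerivAt t hg0
    simpa [Function.comp_def] using this
  have hmt : HasDerivAt (fun s => mu i (R s x y)) (fderiv ℝ (mu i) R0 w0) t := by
    have := hmud.comp_hasDerivAt t hg0
    simpa [Function.comp_def] using this
  have hrhs_t : HasDerivAt (fun s => x + lam i (R s x y) * s + mu i (R s x y) * y)
      (0 + (fderiv ℝ (lam i) R0 w0 * t + lam i (R t x y) * 1) + fderiv ℝ (mu i) R0 w0 * y) t :=
    ((hasDerivAt_const t x).add (hlt.mul (hasDerivAt_id t))).add (hmt.mul_const y)
  have heq_t : fderiv ℝ (vv i) R0 w0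
      = 0 + (fderiv ℝ (lam i) R0 w0 * t + lam i (R t x y) * 1) + fderiv ℝ (mu i) R0 w0 * y := by
    refine hvt.unique ?_
    have hfun : (fun s => vv i (R s x y)) = fun s => x + lam i (R s x y) * s + mu i (R s x y) * y :=
      funext fun s => hhodo i s x y
    rw [hfun]; exact hrhs_t
  have hkey_t : A i i * w0 i = 0 + lam i R0 * 1 + mu i R0 * 0 := by
    refine key w0 1 0 0 ?_
    rw [← hR0] at heq_t
    linear_combination heq_t
  -- x-direction
  have hvx : HasDerivAt (fun s => vv i (R t s y)) (fderiv ℝ (vv i) R0 w1) x := by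
    have := hvvd.comp_hasDerivAt x hg1
    simpa [Function.comp_def] using this
  have hlx : HasDerivAt (fun s => lam i (R t s y)) (fderiv ℝ (lam i) R0 w1) x := by
    have := hlamd.comp_hasDerivAt x hg1
    simpa [Function.comp_def] using this
  have hmx : HasDerivAt (fun s => mu i (R t s y)) (fderiv ℝ (mu i) R0 w1) x := by
    have := hmud.comp_hasDerivAt x hg1
    simpa [Function.comp_def] using this
  have hrhs_x : HasDerivAt (fun s => s + lam i (R t s y) * t + mu i (R t s y) * y)
      (1 + fderiv ℝ (lam i) R0 w1 * t + fderiv ℝ (mu i) R0 w1 * y) x :=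
    ((hasDerivAt_id x).add (hlx.mul_const t)).add (hmx.mul_const y)
  have heq_x : fderiv ℝ (vv i) R0 w1
      = 1 + fderiv ℝ (lam i) R0 w1 * t + fderiv ℝ (mu i) R0 w1 * y := by
    refine hvx.unique ?_
    have hfun : (fun s => vv i (R t s y)) = fun s => s + lam i (R t s y) * t + mu i (R t s y) * y :=
      funext fun s => hhodo i t s y
    rw [hfun]; exact hrhs_x
  have hkey_x : A i i * w1 i = 1 + lam i R0 * 0 + mu i R0 * 0 := by
    refine key w1 0 1 0 ?_
    linear_combination heq_x
  -- y-direction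
  have hvy : HasDerivAt (fun s => vv i (R t x s)) (fderiv ℝ (vv i) R0 w2) y := by
    have := hvvd.comp_hasDerivAt y hg2
    simpa [Function.comp_def] using this
  have hly : HasDerivAt (fun s => lam i (R t x s)) (fderiv ℝ (lam i) R0 w2) y := by
    have := hlamd.comp_hasDerivAt y hg2
    simpa [Function.comp_def] using this
  have hmy : HasDerivAt (fun s => mu i (R t x s)) (fderiv ℝ (mu i) R0 w2) y := by
    have := hmud.comp_hasDerivAt y hg2
    simpa [Function.comp_def] using this
  have hrhs_y : HasDerivAt (fun s => x + lam i (R t x s) * t + mu i (R t x s) * s)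
      (0 + fderiv ℝ (lam i) R0 w2 * t
        + (fderiv ℝ (mu i) R0 w2 * y + mu i (R t x y) * 1)) y :=
    ((hasDerivAt_const y x).add (hly.mul_const t)).add (hmy.mul (hasDerivAt_id y))
  have heq_y : fderiv ℝ (vv i) R0 w2
      = 0 + fderiv ℝ (lam i) R0 w2 * t
        + (fderiv ℝ (mu i) R0 w2 * y + mu i (R t x y) * 1) := by
    refine hvy.unique ?_
    have hfun : (fun s => vv i (R t x s)) = fun s => x + lam i (R t x s) * t + mu i (R t x s) * s :=
      funext fun s => hhodo i t x s
    rw [hfun]; exact hrhs_y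
  have hkey_y : A i i * w2 i = 0 + lam i R0 * 0 + mu i R0 * 1 := by
    refine key w2 0 0 1 ?_
    rw [← hR0] at heq_y
    linear_combination heq_y
  -- conclude
  rw [hg0i.deriv, hg1i.deriv, hg2i.deriv]
  constructor
  · apply mul_left_cancel₀ hAne
    linear_combination hkey_t - lam i R0 * hkey_x
  · apply mul_left_cancel₀ hAne
    linear_combination hkey_y - mu i R0 * hkey_x
end
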